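/- arXiv:2405.07380 — 4 statements merged into one kernel-verified Lean document; each statement's English description precedes it below -/
import Mathlib

section
/- The payoff coefficient vectors of U(θ,α,β) and U(π−θ, 2π−β, π−α), each played as player 1's strategy against an arbitrary player-2 strategy U(θ₂,α₂,β₂), coincide with the corresponding payoff vectors for the row-swapped game; precisely, F(π−θ, θ₂, 2π−β, α₂, π−α, β₂) = (F₃, F₄, F₁, F₂)(θ, θ₂, α, α₂, β, β₂), where Fᵢ denote the four components of the EWL payoff coefficient function. -/
/-
Replacing θ by π − θ swaps cos(θ/2) and sin(θ/2), and each angle combination occurring in F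
changes, after substituting α ↦ 2π − β and β ↦ π − α, into the combination occurring in another
component, up to a sign that disappears on squaring.
-/

open Real

/-- The EWL payoff coefficient vector: coefficients of Δ₀₀, Δ₀₁, Δ₁₀, Δ₁₁. -/
noncomputable def F (θ₁ θ₂ α₁ α₂ β₁ β₂ : ℝ) : ℝ × ℝ × ℝ × ℝ :=
((Real.cos (α₁ + α₂) * Real.cos (θ₁/2) * Real.cos (θ₂/2)
    + Real.sin (β₁ + β₂) * Real.sin (θ₁/2) * Real.sin (θ₂/2))^2,
 (Real.cos (α₁ - β₂) * Real.cos (θ₁/2) * Real.sin (θ₂/2)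
    + Real.sin (α₂ - β₁) * Real.sin (θ₁/2) * Real.cos (θ₂/2))^2,
 (Real.sin (α₁ - β₂) * Real.cos (θ₁/2) * Real.sin (θ₂/2)
    + Real.cos (α₂ - β₁) * Real.sin (θ₁/2) * Real.cos (θ₂/2))^2,
 (Real.sin (α₁ + α₂) * Real.cos (θ₁/2) * Real.cos (θ₂/2)
    - Real.cos (β₁ + β₂) * Real.sin (θ₁/2) * Real.sin (θ₂/2))^2)

lemma cos_pi_sub_half (θ : ℝ) : cos ((π - θ) / 2) = sin (θ / 2) := by
  rw [sub_div, cos_pi_div_two_sub]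

lemma sin_pi_sub_half (θ : ℝ) : sin ((π - θ) / 2) = cos (θ / 2) := by
  rw [sub_div, sin_pi_div_two_sub]

theorem stmt_3 (θ θ₂ α α₂ β β₂ : ℝ) :
    F (π - θ) θ₂ (2*π - β) α₂ (π - α) β₂ =
      ((F θ θ₂ α α₂ β β₂).2.2.1, (F θ θ₂ α α₂ β β₂).2.2.2,
       (F θ θ₂ α α₂ β β₂).1, (F θ θ₂ α α₂ β β₂).2.1) := by
  have cos₁ : cos (2*π - β + α₂) = cos (α₂ - β) := by
    rw [← cos_add_two_pi (α₂ - β)]; ring_nf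
  have sin₁ : sin (π - α + β₂) = sin (α - β₂) := by
    rw [← sin_pi_sub (α - β₂)]; ring_nf
  have cos₂ : cos (2*π - β - β₂) = cos (β + β₂) := by
    rw [sub_sub, cos_two_pi_sub]
  have sin₂ : sin (α₂ - (π - α)) = -sin (α + α₂) := by
    rw [← sin_sub_pi (α + α₂)]; ring_nf
  have sin₃ : sin (2*π - β - β₂) = -sin (β + β₂) := by
    rw [sub_sub, sin_two_pi_sub]
  have cos₃ : cos (α₂ - (π - α)) = -cos (α + α₂) := by
    rw [← cos_sub_pi (α + α₂)]; ring_nf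
  have sin₄ : sin (2*π - β + α₂) = sin (α₂ - β) := by
    rw [← sin_add_two_pi (α₂ - β)]; ring_nf
  have cos₄ : cos (π - α + β₂) = -cos (α - β₂) := by
    rw [← cos_pi_sub (α - β₂)]; ring_nf
  simp only [F, cos_pi_sub_half, sin_pi_sub_half, cos₁, sin₁, cos₂, sin₂, sin₃, cos₃, sin₄, cos₄,
    Prod.mk.injEq]
  refine ⟨by ring, by ring, by ring, by ring⟩
end

section
/- If real numbers α₁, β₁ satisfy sin(2β₁)·cos(2α₁) = 0 and sin(2(α₁ − β₁)) = 0, and additionally both α₁ and β₁ lie in [0, 2π), then either both α₁ and β₁ lie in the set {π/4, 3π/4, 5π/4, 7π/4}, or both lie in the set {0, π/2, π, 3π/2}. -/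
/-!
Both conditions say that certain angles are multiples of `π/2`: `sin (2(α₁ - β₁)) = 0` makes
`α₁ - β₁` a multiple of `π/2`, and `sin (2β₁) cos (2α₁) = 0` makes either `β₁` a multiple of
`π/2` or `α₁` an odd multiple of `π/4`. Either way `α₁` and `β₁` lie in the same coset
`θ + (π/2)ℤ` with `θ ∈ {0, π/4}`, which meets `[0, 2π)` in exactly four points.
-/

open Real Set

lemma exists_int_mul_pi_div_two_of_sin_two_mul_eq_zero {x : ℝ} (h : sin (2 * x) = 0) :
    ∃ n : ℤ, x = n * (π / 2) := by
  obtain ⟨n, hn⟩ := sin_eq_zero_iff.mp h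
  exact ⟨n, by linarith⟩

lemma exists_pi_div_four_add_int_mul_pi_div_two_of_cos_two_mul_eq_zero {x : ℝ}
    (h : cos (2 * x) = 0) : ∃ n : ℤ, x = π / 4 + n * (π / 2) := by
  obtain ⟨n, hn⟩ := cos_eq_zero_iff.mp h
  exact ⟨n, by linarith⟩

lemma mem_of_eq_add_int_mul_pi_div_two {θ x : ℝ} {n : ℤ} (hθ : θ ∈ Ico 0 (π / 2))
    (hx : x = θ + n * (π / 2)) (hx₀ : x ∈ Ico 0 (2 * π)) :
    x ∈ ({θ, θ + π / 2, θ + π, θ + 3 * π / 2} : Set ℝ) := by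
  obtain ⟨hθ₀, hθ₁⟩ := hθ
  obtain ⟨hx₀, hx₁⟩ := hx₀
  have hπ := pi_pos
  have hn₀ : (-1 : ℝ) < n := by nlinarith
  have hn₁ : (n : ℝ) < 4 := by nlinarith
  have : -1 < n := by exact_mod_cast hn₀
  have : n < 4 := by exact_mod_cast hn₁
  interval_cases n <;> simp only [hx, mem_insert_iff, mem_singleton_iff] <;> push_cast <;> ring_nf <;>
    simp

theorem stmt_7 (α₁ β₁ : ℝ)
    (h1 : Real.sin (2*β₁) * Real.cos (2*α₁) = 0)
    (h2 : Real.sin (2*(α₁ - β₁)) = 0)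
    (hα : α₁ ∈ Set.Ico 0 (2*π)) (hβ : β₁ ∈ Set.Ico 0 (2*π)) :
    (α₁ ∈ ({π/4, 3*π/4, 5*π/4, 7*π/4} : Set ℝ) ∧
     β₁ ∈ ({π/4, 3*π/4, 5*π/4, 7*π/4} : Set ℝ)) ∨
    (α₁ ∈ ({0, π/2, π, 3*π/2} : Set ℝ) ∧
     β₁ ∈ ({0, π/2, π, 3*π/2} : Set ℝ)) := by
  have hπ := pi_pos
  obtain ⟨k, hk⟩ := exists_int_mul_pi_div_two_of_sin_two_mul_eq_zero h2
  rcases mul_eq_zero.mp h1 with hs | hc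
  · right
    have grid := @mem_of_eq_add_int_mul_pi_div_two 0
    simp only [zero_add] at grid
    obtain ⟨n, hn⟩ := exists_int_mul_pi_div_two_of_sin_two_mul_eq_zero hs
    refine ⟨grid ⟨le_rfl, by positivity⟩ (n := n + k) (by push_cast; linarith) hα,
      grid ⟨le_rfl, by positivity⟩ hn hβ⟩
  · left
    have grid := @mem_of_eq_add_int_mul_pi_div_two (π / 4)
    have quarter : ({π / 4, π / 4 + π / 2, π / 4 + π, π / 4 + 3 * π / 2} : Set ℝ) =
        {π/4, 3*π/4, 5*π/4, 7*π/4} := by ring_nf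
    rw [quarter] at grid
    obtain ⟨n, hn⟩ := exists_pi_div_four_add_int_mul_pi_div_two_of_cos_two_mul_eq_zero hc
    refine ⟨grid ⟨by positivity, by linarith⟩ hn hα,
      grid ⟨by positivity, by linarith⟩ (n := n - k) (by push_cast; linarith) hβ⟩
end

section
/- For the B-class parameters θ₁ = θ₂ = π/2 and any (α₁,β₁,α₂,β₂) ∈ {π/4,3π/4,5π/4,7π/4}⁴ with α₂ = β₁ + nπ and β₂ = α₁ + lπ (n, l integers), the EWL payoff coefficient vector of the strategy profile (U₁, U₂) equals (1/4, 1/4, 1/4, 1/4). -/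
open Real

lemma key_aux (e f a c q : ℝ) (he : e^2 = 1) (hf : f^2 = 1) (h0 : a*c = 0)
    (hpy : a^2 + c^2 = 1) (hq : q^2 = 1/2) :
    (e*c*q*q + f*a*q*q)^2 = 1/4 := by
  linear_combination ((e^2*c^2 + f^2*a^2 + 2*e*f*a*c) * (q^2 + 1/2)) * hq
    + (c^2/4)*he + (a^2/4)*hf + (e*f/2)*h0 + (1/4)*hpy

theorem stmt_14 (α₁ β₁ α₂ β₂ : ℝ)
    (hα₁ : α₁ ∈ ({π/4, 3*π/4, 5*π/4, 7*π/4} : Set ℝ))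
    (hβ₁ : β₁ ∈ ({π/4, 3*π/4, 5*π/4, 7*π/4} : Set ℝ))
    (hα₂ : α₂ ∈ ({π/4, 3*π/4, 5*π/4, 7*π/4} : Set ℝ))
    (hβ₂ : β₂ ∈ ({π/4, 3*π/4, 5*π/4, 7*π/4} : Set ℝ))
    (hn : ∃ n : ℤ, α₂ = β₁ + n * π) (hl : ∃ l : ℤ, β₂ = α₁ + l * π) :
    F (π/2) (π/2) α₁ α₂ β₁ β₂ = (1/4, 1/4, 1/4, 1/4) := by
  obtain ⟨n, rfl⟩ := hn
  obtain ⟨l, rfl⟩ := hl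
  have hk : ∃ k : ℤ, α₁ + β₁ = k * (π/2) := by
    simp only [Set.mem_insert_iff, Set.mem_singleton_iff] at hα₁ hβ₁
    rcases hα₁ with rfl|rfl|rfl|rfl <;> rcases hβ₁ with rfl|rfl|rfl|rfl <;>
      first
        | (refine ⟨1, ?_⟩; push_cast; ring1)
        | (refine ⟨2, ?_⟩; push_cast; ring1)
        | (refine ⟨3, ?_⟩; push_cast; ring1)
        | (refine ⟨4, ?_⟩; push_cast; ring1)
        | (refine ⟨5, ?_⟩; push_cast; ring1)
        | (refine ⟨6, ?_⟩; push_cast; ring1)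
        | (refine ⟨7, ?_⟩; push_cast; ring1)
  obtain ⟨k, hs⟩ := hk
  have h0 : Real.sin (α₁+β₁) * Real.cos (α₁+β₁) = 0 := by
    have h2 : Real.sin (2*(α₁+β₁)) = 0 := by
      have he : 2*(α₁+β₁) = (k:ℝ)*π := by rw [hs]; ring
      rw [he]; exact Real.sin_int_mul_pi k
    rw [Real.sin_two_mul] at h2; linarith
  have hpy : Real.sin (α₁+β₁)^2 + Real.cos (α₁+β₁)^2 = 1 := Real.sin_sq_add_cos_sq _
  have e2 : ((-1:ℝ)^n)^2 = 1 := by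
    rcases Int.even_or_odd n with h|h
    · rw [h.neg_one_zpow]; norm_num
    · rw [h.neg_one_zpow]; norm_num
  have f2 : ((-1:ℝ)^l)^2 = 1 := by
    rcases Int.even_or_odd l with h|h
    · rw [h.neg_one_zpow]; norm_num
    · rw [h.neg_one_zpow]; norm_num
  have hq : (Real.sqrt 2 / 2)^2 = 1/2 := by
    rw [div_pow, Real.sq_sqrt (by norm_num : (0:ℝ) ≤ 2)]; norm_num
  simp only [F, Prod.mk.injEq]
  have hd : π/2/2 = π/4 := by ring
  have h1 : α₁ + (β₁ + (n:ℝ)*π) = (α₁+β₁) + (n:ℝ)*π := by ring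
  have h2' : β₁ + (α₁ + (l:ℝ)*π) = (α₁+β₁) + (l:ℝ)*π := by ring
  have h3 : α₁ - (α₁ + (l:ℝ)*π) = 0 - (l:ℝ)*π := by ring
  have h4 : β₁ + (n:ℝ)*π - β₁ = 0 + (n:ℝ)*π := by ring
  rw [hd, h1, h2', h3, h4, Real.cos_add_int_mul_pi, Real.sin_add_int_mul_pi,
    Real.cos_sub_int_mul_pi, Real.sin_sub_int_mul_pi,
    Real.cos_add_int_mul_pi, Real.sin_add_int_mul_pi,
    Real.sin_add_int_mul_pi, Real.cos_add_int_mul_pi]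
  simp only [Real.sin_zero, Real.cos_zero, Real.cos_pi_div_four, Real.sin_pi_div_four,
    mul_zero, mul_one, zero_mul, add_zero, zero_add, neg_zero]
  refine ⟨?_, ?_, ?_, ?_⟩
  · linear_combination key_aux ((-1:ℝ)^n) ((-1:ℝ)^l) (Real.sin (α₁+β₁)) (Real.cos (α₁+β₁))
      (Real.sqrt 2 / 2) e2 f2 h0 hpy hq
  · linear_combination key_aux ((-1:ℝ)^l) 1 0 1 (Real.sqrt 2 / 2) f2 (by norm_num)
      (by ring) (by norm_num) hq
  · linear_combination key_aux ((-1:ℝ)^n) 1 0 1 (Real.sqrt 2 / 2) e2 (by norm_num)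
      (by ring) (by norm_num) hq
  · linear_combination key_aux (-(-1:ℝ)^l) ((-1:ℝ)^n) (Real.sin (α₁+β₁)) (Real.cos (α₁+β₁))
      (Real.sqrt 2 / 2) (by linear_combination f2) e2 h0 hpy hq
end

section
/- In the 4×4 game C obtained as the C-class extension of the Prisoner's Dilemma with t = 3/4 (θ₁ = π/3), the pure strategy profiles (iX, U₁) and (U₁, iX) are Nash equilibria with payoff 19/8 for both players, whereas the classical equilibrium profile (iX, iX) is no longer a Nash equilibrium. -/
/-!
The game is symmetric (`B = Aᵀ`), so a pure profile `(i, j)` is an equilibrium exactly when `i`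
is a best reply to `j` and `j` to `i`. Checking columns, `iX` and `U₁` are mutual best replies,
while against `iX` the deviation `iX → U₁` raises the payoff from `1` to `19/8`.
-/

open Matrix

def IsNash {n : Type*} [Fintype n] (A B : Matrix n n ℚ) (s : n × n) : Prop :=
  (∀ k, A k s.2 ≤ A s.1 s.2) ∧ (∀ l, B s.1 l ≤ B s.1 s.2)

def IsBestReply {n : Type*} (A : Matrix n n ℚ) (i j : n) : Prop :=
  ∀ k, A k j ≤ A i j

theorem isNash_transpose_iff {n : Type*} [Fintype n] (A : Matrix n n ℚ) (i j : n) :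
    IsNash A Aᵀ (i, j) ↔ IsBestReply A i j ∧ IsBestReply A j i :=
  Iff.rfl

theorem not_isBestReply_of_lt {n : Type*} {A : Matrix n n ℚ} {i j k : n}
    (h : A i j < A k j) : ¬ IsBestReply A i j :=
  fun hi => (hi k).not_gt h

theorem stmt_17 :
    let A : Matrix (Fin 4) (Fin 4) ℚ :=
      !![3, 0, 17/8, 19/8;
         5, 1, 19/8, 17/8;
         17/8, 19/8, 27/16, 57/16;
         19/8, 17/8, 17/16, 43/16]
    let B : Matrix (Fin 4) (Fin 4) ℚ :=
      !![3, 5, 17/8, 19/8;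
         0, 1, 19/8, 17/8;
         17/8, 19/8, 27/16, 17/16;
         19/8, 17/8, 57/16, 43/16]
    IsNash A B (1, 2) ∧ IsNash A B (2, 1) ∧
    A 1 2 = 19/8 ∧ B 1 2 = 19/8 ∧ A 2 1 = 19/8 ∧ B 2 1 = 19/8 ∧
    ¬ IsNash A B (1, 1) := by
  intro A B
  have hB : B = Aᵀ := by
    ext i j
    fin_cases i <;> fin_cases j <;> rfl
  have h12 : IsBestReply A 1 2 := by
    intro k
    fin_cases k <;> simp [A] <;> norm_num
  have h21 : IsBestReply A 2 1 := by
    intro k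
    fin_cases k <;> simp [A] <;> norm_num
  have h11 : ¬ IsBestReply A 1 1 := not_isBestReply_of_lt (k := 2) (by simp [A]; norm_num)
  rw [hB, isNash_transpose_iff, isNash_transpose_iff, isNash_transpose_iff]
  exact ⟨⟨h12, h21⟩, ⟨h21, h12⟩, rfl, rfl, rfl, rfl, fun h => h11 h.1⟩
end
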